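/- arXiv:1006.4968 — 3 statements merged into one kernel-verified Lean document; each statement's English description precedes it below -/
import Mathlib

section
/- Let PV_1,…,PV_K (K ≥ 1) be real-valued random variables on a probability space (Ω, P), let I_0 ⊆ {1,…,K} be the (arbitrary) index set of true null hypotheses, and assume each PV_i with i ∈ I_0 is superuniform, i.e. P(PV_i ≤ u) ≤ u for all u ∈ [0,1]. Fix α ∈ [0,1]. Holm's step-down procedure is defined as follows: for a realization pv_1,…,pv_K with order statistics pv_(1) ≤ … ≤ pv_(K), hypothesis H_0^i is rejected if and only if pv_(m) ≤ α/(K−m+1) holds for every m = 1,…,R_i, where R_i = #{l : pv_l ≤ pv_i} is the rank of pv_i. Then P(Holm's procedure rejects at least one hypothesis indexed by I_0) ≤ α, i.e. Holm's procedure strongly controls the familywise error rate at level α. -/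
open MeasureTheory ProbabilityTheory

/-! If Holm's procedure rejects some true null `i`, let `j` be the true null with the smallest
p-value. Only false nulls have p-values below `pv j`, so `m := #{l : pv l < pv j} + 1` satisfies
`K - m + 1 ≥ |I₀|`; moreover `m ≤ R_i` and `pv j ≤ pv_(m)`. The step-down condition at `m` gives
`pv j ≤ α / (K - m + 1) ≤ α / |I₀|`, so the event lies inside the Bonferroni event
`∃ j ∈ I₀, pv j ≤ α / |I₀|`, whose probability is at most `α` by the union bound. -/

/-- The `m`-th smallest value (1-based) of `pv : Fin K → ℝ`, i.e. the order statistic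
`pv_(m)`, obtained from the sorted list of values. -/
noncomputable def orderStat {K : ℕ} (pv : Fin K → ℝ) (m : ℕ) : ℝ :=
  ((List.ofFn pv).mergeSort (fun a b => a ≤ b)).getD (m - 1) 0

/-- Holm's step-down procedure rejects `H_0^i` iff `pv_(m) ≤ α/(K − m + 1)` for every
`m = 1, …, R_i`, where `R_i = #{l : pv_l ≤ pv_i}` is the rank of `pv_i`. -/
noncomputable def holmRejects (K : ℕ) (α : ℝ) (pv : Fin K → ℝ) (i : Fin K) : Prop :=
  ∀ m : ℕ, 1 ≤ m → m ≤ (Finset.univ.filter fun l => pv l ≤ pv i).card →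
    orderStat pv m ≤ α / ((K : ℝ) - (m : ℝ) + 1)

theorem List.SortedLE.le_getElem_of_countP_le {α : Type*} [LinearOrder α] {L : List α}
    (hL : L.SortedLE) {k : ℕ} (hk : k < L.length) {t : α} (hcount : L.countP (· < t) ≤ k) :
    t ≤ L[k] := by
  by_contra! hlt
  have hprefix : (L.take (k + 1)).countP (· < t) = k + 1 := by
    rw [List.countP_eq_length.mpr, List.length_take_of_le hk]
    intro a ha
    obtain ⟨i, hi, rfl⟩ := List.mem_iff_getElem.mp ha
    rw [List.length_take_of_le hk] at hi
    rw [List.getElem_take]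
    have hik : L[i] ≤ L[k] :=
      List.sortedLE_iff_getElem_le_getElem_of_le.mp hL (Nat.le_of_lt_succ hi)
    simpa using hik.trans_lt hlt
  have := (L.take_sublist (k + 1)).countP_le (p := (· < t))
  omega

theorem le_orderStat_of_card_lt {K : ℕ} (pv : Fin K → ℝ) {m : ℕ} (hm : 1 ≤ m) (hmK : m ≤ K)
    {t : ℝ} (hcard : (Finset.univ.filter fun l => pv l < t).card < m) :
    t ≤ orderStat pv m := by
  set L := (List.ofFn pv).mergeSort (fun a b => a ≤ b)
  have hperm : L.Perm (List.ofFn pv) := List.mergeSort_perm _ _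
  have hlen : m - 1 < L.length := by rw [hperm.length_eq, List.length_ofFn]; omega
  have hcount : L.countP (· < t) = (Finset.univ.filter fun l => pv l < t).card := by
    rw [hperm.countP_eq, List.ofFn_eq_map, List.countP_map, List.countP_eq_length_filter,
      Finset.card, Finset.filter_val, Fin.univ_def]
    simp [Function.comp_def]
  have hcount_le : L.countP (· < t) ≤ m - 1 := by omega
  rw [orderStat, List.getD_eq_getElem _ _ hlen]
  exact List.sortedLE_mergeSort.le_getElem_of_countP_le hlen hcount_le

theorem exists_le_div_card_of_holmRejects {K : ℕ} {α : ℝ} (hα : 0 ≤ α) {pv : Fin K → ℝ}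
    {I₀ : Finset (Fin K)} {i : Fin K} (hi : i ∈ I₀) (hrej : holmRejects K α pv i) :
    ∃ j ∈ I₀, pv j ≤ α / I₀.card := by
  have hI₀ : 0 < I₀.card := Finset.card_pos.mpr ⟨i, hi⟩
  obtain ⟨j, hj, hmin⟩ := I₀.exists_min_image pv ⟨i, hi⟩
  set below := Finset.univ.filter fun l => pv l < pv j
  have hbelow_add : below.card + I₀.card ≤ K := by
    have hdisj : Disjoint below I₀ := Finset.disjoint_left.mpr fun l hl hlI =>
      (Finset.mem_filter.mp hl).2.not_ge (hmin l hlI)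
    simpa [Finset.card_union_of_disjoint hdisj] using Finset.card_le_univ (below ∪ I₀)
  have hbelow_rank : below.card + 1 ≤ (Finset.univ.filter fun l => pv l ≤ pv i).card := by
    rw [← Finset.card_insert_of_notMem (s := below) (a := j) (by simp [below])]
    refine Finset.card_le_card fun l hl => ?_
    simp only [below, Finset.mem_insert, Finset.mem_filter, Finset.mem_univ, true_and] at hl ⊢
    rcases hl with rfl | hl
    exacts [hmin i hi, (hl.trans_le (hmin i hi)).le]
  have hstat := hrej (below.card + 1) (by omega) hbelow_rank
  have hj_le := le_orderStat_of_card_lt pv (by omega) (by omega) (Nat.lt_succ_self below.card)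
  refine ⟨j, hj, hj_le.trans (hstat.trans (div_le_div_of_nonneg_left hα ?_ ?_))⟩
  · exact_mod_cast hI₀
  · have : ((below.card + I₀.card : ℕ) : ℝ) ≤ K := by exact_mod_cast hbelow_add
    push_cast at this ⊢
    linarith

theorem measure_exists_le_div_card_le {Ω ι : Type*} [MeasurableSpace Ω] (P : Measure Ω)
    (X : ι → Ω → ℝ) (I : Finset ι)
    (hsuper : ∀ i ∈ I, ∀ u ∈ Set.Icc (0 : ℝ) 1, P {ω | X i ω ≤ u} ≤ ENNReal.ofReal u)
    {α : ℝ} (hα : α ∈ Set.Icc (0 : ℝ) 1) :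
    P {ω | ∃ i ∈ I, X i ω ≤ α / I.card} ≤ ENNReal.ofReal α := by
  rcases I.eq_empty_or_nonempty with rfl | hI
  · simp
  have hcard : (1 : ℝ) ≤ I.card := by exact_mod_cast hI.card_pos
  have hu : α / I.card ∈ Set.Icc (0 : ℝ) 1 :=
    ⟨by positivity [hα.1], (div_le_self hα.1 hcard).trans hα.2⟩
  calc P {ω | ∃ i ∈ I, X i ω ≤ α / I.card}
      = P (⋃ i ∈ I, {ω | X i ω ≤ α / I.card}) := by congr 1; ext; simp
    _ ≤ ∑ i ∈ I, P {ω | X i ω ≤ α / I.card} := measure_biUnion_finset_le I _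
    _ ≤ ∑ _i ∈ I, ENNReal.ofReal (α / I.card) := Finset.sum_le_sum fun i hi => hsuper i hi _ hu
    _ = ENNReal.ofReal α := by
      rw [Finset.sum_const, nsmul_eq_mul, ← ENNReal.ofReal_natCast,
        ← ENNReal.ofReal_mul (by positivity), mul_div_cancel₀ _ (by positivity)]

theorem holm_strong_FWER_control_general
    {Ω : Type*} [MeasurableSpace Ω] (P : Measure Ω)
    (K : ℕ)
    (PV : Fin K → Ω → ℝ)
    (I₀ : Finset (Fin K))
    (hsuper : ∀ i ∈ I₀, ∀ u ∈ Set.Icc (0 : ℝ) 1,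
      P {ω | PV i ω ≤ u} ≤ ENNReal.ofReal u)
    (α : ℝ) (hα : α ∈ Set.Icc (0 : ℝ) 1) :
    P {ω | ∃ i ∈ I₀, holmRejects K α (fun l => PV l ω) i} ≤ ENNReal.ofReal α :=
  calc P {ω | ∃ i ∈ I₀, holmRejects K α (fun l => PV l ω) i}
      ≤ P {ω | ∃ i ∈ I₀, PV i ω ≤ α / I₀.card} :=
        measure_mono fun _ ⟨_, hi, hrej⟩ => exists_le_div_card_of_holmRejects hα.1 hi hrej
    _ ≤ ENNReal.ofReal α := measure_exists_le_div_card_le P PV I₀ hsuper hα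

/-- **Strong FWER control of Holm's step-down procedure.**  If the p-values of the true null
hypotheses (indexed by `I₀`) are superuniform, then the probability that Holm's procedure
rejects at least one true hypothesis is at most `α`. -/
theorem holm_strong_FWER_control
    {Ω : Type*} [MeasurableSpace Ω] (P : Measure Ω) [IsProbabilityMeasure P]
    (K : ℕ) (hK : 1 ≤ K)
    (PV : Fin K → Ω → ℝ) (hPV : ∀ i, Measurable (PV i))
    (I₀ : Finset (Fin K))
    (hsuper : ∀ i ∈ I₀, ∀ u ∈ Set.Icc (0 : ℝ) 1,
      P {ω | PV i ω ≤ u} ≤ ENNReal.ofReal u)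
    (α : ℝ) (hα : α ∈ Set.Icc (0 : ℝ) 1) :
    P {ω | ∃ i ∈ I₀, holmRejects K α (fun l => PV l ω) i} ≤ ENNReal.ofReal α :=
  holm_strong_FWER_control_general P K PV I₀ hsuper α hα
end

section
/- Let S be a nonempty finite set and let T be an S-valued random variable on a probability space (Ω, P) with probability mass function f(s) = P(T = s). Define the two-sided minimum-likelihood p-value pv(s) = ∑_{t ∈ S : f(t) ≤ f(s)} f(t), i.e. the sum of the probabilities of all outcomes with likelihood no larger than that of the observed outcome. Then the random variable pv(T) is superuniform: for every u ∈ [0,1], P(pv(T) ≤ u) ≤ u. -/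
open MeasureTheory

/-- **The minimum-likelihood two-sided p-value of a discrete statistic is superuniform.**
Let `T` take values in a nonempty finite set `S`, with probability mass function
`f s = P(T = s)`, and define the two-sided p-value `pv s = ∑_{t : f t ≤ f s} f t`.  Then
`P(pv T ≤ u) ≤ u` for every `u ∈ [0, 1]`. -/
theorem minimum_likelihood_pvalue_superuniform
    {Ω : Type*} [MeasurableSpace Ω] (P : Measure Ω) [IsProbabilityMeasure P]
    {S : Type*} [Fintype S] [Nonempty S] [MeasurableSpace S] [MeasurableSingletonClass S]
    (T : Ω → S) (hT : Measurable T)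
    (f : S → ENNReal) (hf : ∀ s, f s = P {ω | T ω = s})
    (pv : S → ENNReal)
    (hpv : ∀ s, pv s = ∑ t ∈ Finset.univ.filter (fun t => f t ≤ f s), f t) :
    ∀ u : ENNReal, u ≤ 1 → P {ω | pv (T ω) ≤ u} ≤ u := by
  intro u hu
  set A : Finset S := Finset.univ.filter (fun s => pv s ≤ u) with hA
  have hset : {ω | pv (T ω) ≤ u} = ⋃ s ∈ A, {ω | T ω = s} := by
    ext ω
    simp [hA]
  have hmeas : P {ω | pv (T ω) ≤ u} = ∑ s ∈ A, f s := by
    rw [hset, measure_biUnion_finset]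
    · exact Finset.sum_congr rfl fun s _ => (hf s).symm
    · intro s _ t _ hst
      refine Set.disjoint_left.mpr fun ω h1 h2 => hst ?_
      rw [← h1, ← h2]
    · intro s _
      exact hT (measurableSet_singleton s)
  rw [hmeas]
  rcases A.eq_empty_or_nonempty with h | h
  · simp [h]
  · obtain ⟨s0, hs0A, hmax⟩ := A.exists_max_image f h
    have hsub : A ⊆ Finset.univ.filter (fun t => f t ≤ f s0) := by
      intro t ht
      simp only [Finset.mem_filter, Finset.mem_univ, true_and]
      exact hmax t ht
    calc ∑ s ∈ A, f s ≤ ∑ t ∈ Finset.univ.filter (fun t => f t ≤ f s0), f t :=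
          Finset.sum_le_sum_of_subset hsub
      _ = pv s0 := (hpv s0).symm
      _ ≤ u := by simpa [hA] using hs0A
end

section
/- Let PV_1,…,PV_K be real-valued random variables defined on a common measurable space Ω, let μ be a probability measure on Ω (the true model) and μ_0 a probability measure on Ω (the global null model). Let I_0 ⊆ {1,…,K} be a nonempty index set of true null hypotheses and assume subset pivotality for I_0: the joint law of the random vector (PV_i)_{i∈I_0} under μ equals its joint law under μ_0. Let F(x) = μ_0(min_{1≤i≤K} PV_i ≤ x) be the distribution function of the minimum of all K p-values under the global null. Then for every α ∈ [0,1], μ(∃ i ∈ I_0 : F(PV_i) ≤ α) ≤ α; i.e. the single-step min-P procedure, which rejects H_0^j whenever F(pv_j) ≤ α, rejects at least one true hypothesis with probability at most α. -/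
open MeasureTheory

/-- **Strong FWER control of the single-step min-P procedure under subset pivotality.**
Let `μ` be the true model and `μ₀` the global null model, let `I₀` be a nonempty set of true
null hypotheses, and assume subset pivotality: the joint law of `(PV_i)_{i ∈ I₀}` under `μ` is
the same as under `μ₀`.  If `F` is the distribution function of `min(PV_1, …, PV_K)` under
`μ₀`, then the min-P procedure, rejecting `H_0^j` whenever `F(PV_j) ≤ α`, rejects at least one
true hypothesis with `μ`-probability at most `α`. -/
theorem minP_strong_FWER_control_of_subset_pivotality
    {Ω : Type*} [MeasurableSpace Ω] (μ μ₀ : Measure Ω)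
    [IsProbabilityMeasure μ] [IsProbabilityMeasure μ₀]
    (K : ℕ) (hK : 1 ≤ K)
    (PV : Fin K → Ω → ℝ) (hPV : ∀ i, Measurable (PV i))
    (I₀ : Finset (Fin K)) (hI₀ : I₀.Nonempty)
    (hSPC : Measure.map (fun ω => fun i : I₀ => PV i ω) μ
      = Measure.map (fun ω => fun i : I₀ => PV i ω) μ₀)
    (F : ℝ → ℝ)
    (hF : ∀ x, F x = (μ₀ {ω | Finset.univ.inf' (Finset.univ_nonempty_iff.mpr ⟨⟨0, hK⟩⟩)
      (fun i => PV i ω) ≤ x}).toReal)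
    (α : ℝ) (hα : α ∈ Set.Icc (0 : ℝ) 1) :
    μ {ω | ∃ i ∈ I₀, F (PV i ω) ≤ α} ≤ ENNReal.ofReal α := by
  obtain ⟨hα0, _hα1⟩ := hα
  set ne : (Finset.univ : Finset (Fin K)).Nonempty :=
    Finset.univ_nonempty_iff.mpr ⟨⟨0, hK⟩⟩ with hne
  set M : Ω → ℝ := fun ω => Finset.univ.inf' ne (fun i => PV i ω) with hMdef
  -- `F` is monotone, hence measurable
  have hFmono : Monotone F := by
    intro x y hxy
    rw [hF x, hF y]
    exact ENNReal.toReal_mono (measure_ne_top _ _)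
      (measure_mono fun ω h => le_trans h hxy)
  have hFmeas : Measurable F := hFmono.measurable
  -- `M` is measurable
  have hMmeas : Measurable M := by
    have : M = Finset.univ.inf' ne PV := by
      funext ω; rw [hMdef, Finset.inf'_apply]
    rw [this]
    exact Finset.inf'_induction ne _ (fun f hf g hg => hf.inf hg) fun i _ => hPV i
  -- key bound : if `F x ≤ α` then `μ₀ {M ≤ x} ≤ ofReal α`
  have hkey : ∀ x : ℝ, F x ≤ α → μ₀ {ω | M ω ≤ x} ≤ ENNReal.ofReal α := by
    intro x hx
    have h1 : μ₀ {ω | M ω ≤ x} = ENNReal.ofReal (F x) := by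
      rw [hF x, ENNReal.ofReal_toReal (measure_ne_top _ _)]
    rw [h1]
    exact ENNReal.ofReal_le_ofReal hx
  -- Step 1: the rejection event has the same probability under μ and μ₀ (SPC)
  set S : (↥I₀ → ℝ) → Prop := fun v => ∃ i : I₀, F (v i) ≤ α with hSdef
  have hmapmeas : Measurable (fun ω => fun i : I₀ => PV i ω) :=
    measurable_pi_lambda _ fun i => hPV i
  have hSmeas : MeasurableSet {v : ↥I₀ → ℝ | S v} := by
    have : {v : ↥I₀ → ℝ | S v} = ⋃ i : I₀, {v | F (v i) ≤ α} := by
      ext v; simp [hSdef]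
    rw [this]
    exact MeasurableSet.iUnion fun i =>
      (hFmeas.comp (measurable_pi_apply i)) measurableSet_Iic
  have hE : {ω | ∃ i ∈ I₀, F (PV i ω) ≤ α}
      = (fun ω => fun i : I₀ => PV i ω) ⁻¹' {v | S v} := by
    ext ω
    simp only [Set.mem_setOf_eq, Set.mem_preimage, hSdef]
    constructor
    · rintro ⟨i, hi, h⟩; exact ⟨⟨i, hi⟩, h⟩
    · rintro ⟨⟨i, hi⟩, h⟩; exact ⟨i, hi, h⟩
  have htransfer : μ {ω | ∃ i ∈ I₀, F (PV i ω) ≤ α}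
      = μ₀ {ω | ∃ i ∈ I₀, F (PV i ω) ≤ α} := by
    rw [hE, ← Measure.map_apply hmapmeas hSmeas, hSPC,
      Measure.map_apply hmapmeas hSmeas]
  rw [htransfer]
  -- Step 2: under μ₀ the event is contained in {F (M) ≤ α}
  have hsub : {ω | ∃ i ∈ I₀, F (PV i ω) ≤ α} ⊆ {ω | F (M ω) ≤ α} := by
    rintro ω ⟨i, hi, h⟩
    have hMle : M ω ≤ PV i ω := Finset.inf'_le _ (Finset.mem_univ i)
    exact le_trans (hFmono hMle) h
  refine le_trans (measure_mono hsub) ?_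
  -- Step 3: μ₀ {F (M) ≤ α} ≤ ofReal α
  by_cases hmax : ∃ m : ℝ, F m ≤ α ∧ ∀ x : ℝ, F x ≤ α → x ≤ m
  · obtain ⟨m, hm, hmx⟩ := hmax
    have : {ω | F (M ω) ≤ α} ⊆ {ω | M ω ≤ m} := fun ω h => hmx _ h
    exact le_trans (measure_mono this) (hkey m hm)
  · -- no maximal element: cover by countably many rational levels
    push_neg at hmax
    set T : ℚ → Set Ω := fun q => if F q ≤ α then {ω | M ω ≤ (q : ℝ)} else ∅ with hT
    have hTsub : {ω | F (M ω) ≤ α} ⊆ ⋃ q : ℚ, T q := by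
      intro ω hω
      obtain ⟨x, hx, hlt⟩ := hmax (M ω) hω
      obtain ⟨q, hq1, hq2⟩ := exists_rat_btwn hlt
      have hqA : F q ≤ α := le_trans (hFmono hq2.le) hx
      refine Set.mem_iUnion.mpr ⟨q, ?_⟩
      rw [hT]
      simp only [hqA, if_true]
      exact le_of_lt hq1
    have hdir : Directed (· ⊆ ·) T := by
      intro p q
      by_cases hp : F p ≤ α <;> by_cases hq : F q ≤ α
      · have hsup : F ((p ⊔ q : ℚ) : ℝ) ≤ α := by
          rcases le_total p q with h | h
          · rwa [sup_eq_right.mpr h]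
          · rwa [sup_eq_left.mpr h]
        refine ⟨p ⊔ q, ?_, ?_⟩
        · rw [hT]
          simp only [hp, hsup, if_true]
          intro ω hω
          have h' : M ω ≤ (p : ℝ) := hω
          exact h'.trans (Rat.cast_le.mpr le_sup_left)
        · rw [hT]
          simp only [hq, hsup, if_true]
          intro ω hω
          have h' : M ω ≤ (q : ℝ) := hω
          exact h'.trans (Rat.cast_le.mpr le_sup_right)
      · exact ⟨p, subset_rfl, by rw [hT]; simp [hq]⟩
      · exact ⟨q, by rw [hT]; simp [hp], subset_rfl⟩
      · exact ⟨p, subset_rfl, by rw [hT]; simp [hq]⟩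
    calc μ₀ {ω | F (M ω) ≤ α} ≤ μ₀ (⋃ q : ℚ, T q) := measure_mono hTsub
      _ = ⨆ q : ℚ, μ₀ (T q) := hdir.measure_iUnion
      _ ≤ ENNReal.ofReal α := by
          refine iSup_le fun q => ?_
          rw [hT]
          by_cases hq : F q ≤ α
          · simp only [hq, if_true]; exact hkey _ hq
          · simp [hq]
end
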